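/- arXiv:1206.2305 — 8 statements merged into one kernel-verified Lean document; each statement's English description precedes it below -/
import Mathlib

section
/- Let $\alpha \in [0,1)$ and let $x : [0,\infty) \to [0,\infty)$ be a continuous function with $x(0)=1$, and let $x^*(t) = \sup_{s \in [0,t]} x(s)$ be its running maximum. Define the Az\'ema--Yor transform ${}^{\alpha}x(t) = \alpha (x^*(t))^{1-\alpha} + (1-\alpha) x(t) (x^*(t))^{-\alpha}$. Then the running maximum of ${}^{\alpha}x$ satisfies $({}^{\alpha}x)^*(t) = (x^*(t))^{1-\alpha}$ for all $t \geq 0$. -/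
open Real Set

theorem azema_yor_running_max
    (α : ℝ) (hα0 : 0 ≤ α) (hα1 : α < 1)
    (x : ℝ → ℝ) (hxc : ContinuousOn x (Set.Ici 0))
    (hxnn : ∀ t ≥ (0:ℝ), 0 ≤ x t) (hx0 : x 0 = 1)
    (xstar : ℝ → ℝ) (hxstar : ∀ t, xstar t = sSup (x '' Set.Icc 0 t))
    (ax : ℝ → ℝ)
    (hax : ∀ t, ax t = α * (xstar t) ^ (1 - α) + (1 - α) * x t * (xstar t) ^ (-α)) :
    ∀ t ≥ (0:ℝ), sSup (ax '' Set.Icc 0 t) = (xstar t) ^ (1 - α) := by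
  intro t ht
  have hsub : ∀ s : ℝ, Set.Icc 0 s ⊆ Set.Ici 0 := fun s => Set.Icc_subset_Ici_self
  have hbdd : ∀ s : ℝ, BddAbove (x '' Set.Icc 0 s) := by
    intro s
    exact (isCompact_Icc.image_of_continuousOn (hxc.mono (hsub s))).bddAbove
  have hne : ∀ s : ℝ, 0 ≤ s → (x '' Set.Icc 0 s).Nonempty := by
    intro s hs; exact ⟨x 0, ⟨0, ⟨le_refl 0, hs⟩, rfl⟩⟩
  have hle_star : ∀ s : ℝ, 0 ≤ s → x s ≤ xstar s := by
    intro s hs; rw [hxstar]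
    exact le_csSup (hbdd s) ⟨s, ⟨hs, le_refl s⟩, rfl⟩
  have hone : ∀ s : ℝ, 0 ≤ s → 1 ≤ xstar s := by
    intro s hs; rw [hxstar, ← hx0]
    exact le_csSup (hbdd s) ⟨0, ⟨le_refl 0, hs⟩, rfl⟩
  have hpos : ∀ s : ℝ, 0 ≤ s → 0 < xstar s := fun s hs =>
    lt_of_lt_of_le one_pos (hone s hs)
  have hmono : ∀ s : ℝ, s ∈ Set.Icc 0 t → xstar s ≤ xstar t := by
    intro s hs
    rw [hxstar, hxstar]
    exact csSup_le_csSup (hbdd t) (hne s hs.1)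
      (Set.image_mono (Set.Icc_subset_Icc le_rfl hs.2))
  have hkey : ∀ a : ℝ, 0 < a → a ^ (1 - α) = a * a ^ (-α) := by
    intro a ha
    rw [show (1 - α) = 1 + (-α) by ring, Real.rpow_add ha, Real.rpow_one]
  have hbound : ∀ y ∈ ax '' Set.Icc 0 t, y ≤ (xstar t) ^ (1 - α) := by
    rintro _ ⟨s, hs, rfl⟩
    have hs0 := hs.1
    have h1 : ax s ≤ (xstar s) ^ (1 - α) := by
      rw [hax, hkey _ (hpos s hs0)]
      have hmul : x s * (xstar s) ^ (-α) ≤ xstar s * (xstar s) ^ (-α) :=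
        mul_le_mul_of_nonneg_right (hle_star s hs0)
          (Real.rpow_nonneg (hpos s hs0).le _)
      nlinarith [hmul]
    have h2 : (xstar s) ^ (1 - α) ≤ (xstar t) ^ (1 - α) :=
      Real.rpow_le_rpow (hpos s hs0).le (hmono s hs) (by linarith)
    linarith
  obtain ⟨s0, hs0mem, hs0max⟩ := isCompact_Icc.exists_isMaxOn
    ⟨0, ⟨le_refl 0, ht⟩⟩ (hxc.mono (hsub t))
  have hstar_eq : xstar t = x s0 := by
    apply le_antisymm
    · rw [hxstar]
      exact csSup_le (hne t ht) (by rintro _ ⟨u, hu, rfl⟩; exact hs0max hu)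
    · rw [hxstar]; exact le_csSup (hbdd t) ⟨s0, hs0mem, rfl⟩
  have hss0 : xstar s0 = xstar t := by
    apply le_antisymm (hmono s0 hs0mem)
    rw [hstar_eq]; exact hle_star s0 hs0mem.1
  have hax0 : ax s0 = (xstar t) ^ (1 - α) := by
    rw [hax, hss0, ← hstar_eq, hkey _ (hpos t ht)]
    ring
  apply le_antisymm
  · exact csSup_le ⟨ax 0, ⟨0, ⟨le_refl 0, ht⟩, rfl⟩⟩ hbound
  · rw [← hax0]
    exact le_csSup ⟨(xstar t) ^ (1 - α), hbound⟩ ⟨s0, hs0mem, rfl⟩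
end

section
/- Let $\alpha \in [0,1)$ and let $x : [0,\infty) \to [0,\infty)$ be continuous with $x(0)=1$ and running maximum $x^*$. Define ${}^{\alpha}x(t) = \alpha (x^*(t))^{1-\alpha} + (1-\alpha) x(t) (x^*(t))^{-\alpha}$. Then for all $t \geq 0$, $\frac{{}^{\alpha}x(t)}{({}^{\alpha}x)^*(t)} = \alpha + (1-\alpha)\frac{x(t)}{x^*(t)} \geq \alpha$; in particular ${}^{\alpha}x$ satisfies the $\alpha$-drawdown constraint ${}^{\alpha}x(t) \geq \alpha\, ({}^{\alpha}x)^*(t)$ for all $t$. -/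
open Real Set

theorem azema_yor_drawdown
    (α : ℝ) (hα0 : 0 ≤ α) (hα1 : α < 1)
    (x : ℝ → ℝ) (hxc : ContinuousOn x (Set.Ici 0))
    (hxnn : ∀ t ≥ (0:ℝ), 0 ≤ x t) (hx0 : x 0 = 1)
    (xstar : ℝ → ℝ) (hxstar : ∀ t, xstar t = sSup (x '' Set.Icc 0 t))
    (ax : ℝ → ℝ)
    (hax : ∀ t, ax t = α * (xstar t) ^ (1 - α) + (1 - α) * x t * (xstar t) ^ (-α))
    (axstar : ℝ → ℝ) (haxstar : ∀ t, axstar t = sSup (ax '' Set.Icc 0 t)) :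
    ∀ t ≥ (0:ℝ),
      ax t / axstar t = α + (1 - α) * (x t / xstar t) ∧
      α ≤ ax t / axstar t ∧
      α * axstar t ≤ ax t := by
  have h1α : (0:ℝ) < 1 - α := by linarith
  have hid : ∀ X : ℝ, 0 < X → X ^ (1 - α) = X * X ^ (-α) := by
    intro X hX
    rw [show (1 - α) = 1 + (-α) by ring, Real.rpow_add hX, Real.rpow_one]
  -- basic facts for each s ≥ 0
  have hbdd : ∀ s : ℝ, 0 ≤ s → BddAbove (x '' Icc 0 s) := by
    intro s hs
    exact ((isCompact_Icc.image_of_continuousOn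
      (hxc.mono (fun u hu => hu.1)))).bddAbove
  have hX1 : ∀ s : ℝ, 0 ≤ s → 1 ≤ xstar s := by
    intro s hs
    rw [hxstar, ← hx0]
    exact le_csSup (hbdd s hs) (mem_image_of_mem x ⟨le_refl 0, hs⟩)
  have hXpos : ∀ s : ℝ, 0 ≤ s → 0 < xstar s := fun s hs =>
    lt_of_lt_of_le one_pos (hX1 s hs)
  have hle : ∀ s : ℝ, 0 ≤ s → x s ≤ xstar s := by
    intro s hs
    rw [hxstar]
    exact le_csSup (hbdd s hs) (mem_image_of_mem x ⟨hs, le_refl s⟩)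
  have hmono : ∀ s t : ℝ, 0 ≤ s → s ≤ t → xstar s ≤ xstar t := by
    intro s t hs hst
    rw [hxstar, hxstar]
    exact csSup_le_csSup (hbdd t (hs.trans hst))
      ⟨x 0, mem_image_of_mem x ⟨le_refl 0, hs⟩⟩
      (image_mono (f := x) (Icc_subset_Icc_right hst))
  intro t ht
  set X := xstar t with hXdef
  have hXp : 0 < X := hXpos t ht
  -- upper bound for ax on [0,t]
  have haxle : ∀ s ∈ Icc (0:ℝ) t, ax s ≤ X ^ (1 - α) := by
    intro s hs
    have hs0 : 0 ≤ s := hs.1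
    have hXsp : 0 < xstar s := hXpos s hs0
    have hXst : xstar s ≤ X := hmono s t hs0 hs.2
    have hpow : xstar s ^ (1 - α) ≤ X ^ (1 - α) :=
      Real.rpow_le_rpow hXsp.le hXst h1α.le
    have h2 : (1 - α) * x s * (xstar s) ^ (-α)
        ≤ (1 - α) * (xstar s) ^ (1 - α) := by
      rw [hid _ hXsp, ← mul_assoc]
      exact mul_le_mul_of_nonneg_right
        (mul_le_mul_of_nonneg_left (hle s hs0) h1α.le)
        (Real.rpow_nonneg hXsp.le (-α))
    calc ax s = α * (xstar s) ^ (1 - α) + (1 - α) * x s * (xstar s) ^ (-α) :=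
          hax s
      _ ≤ α * X ^ (1 - α) + (1 - α) * X ^ (1 - α) := by nlinarith
      _ = X ^ (1 - α) := by ring
  -- the sup of x on [0,t] is attained
  obtain ⟨s0, hs0mem, hs0eq⟩ := isCompact_Icc.exists_sSup_image_eq
    ⟨0, le_refl 0, ht⟩ (hxc.mono (fun u hu => hu.1))
  have hxs0 : x s0 = X := by rw [hXdef, hxstar]; exact hs0eq.symm
  have hXs0 : xstar s0 = X := le_antisymm (hmono s0 t hs0mem.1 hs0mem.2)
    (by rw [← hxs0]; exact hle s0 hs0mem.1)
  have haxs0 : ax s0 = X ^ (1 - α) := by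
    rw [hax, hXs0, hxs0, hid X hXp]; ring
  -- axstar t = X ^ (1-α)
  have hastar : axstar t = X ^ (1 - α) := by
    rw [haxstar]
    apply le_antisymm
    · exact csSup_le ⟨ax s0, mem_image_of_mem ax hs0mem⟩
        (fun y ⟨s, hs, hy⟩ => hy ▸ haxle s hs)
    · rw [← haxs0]
      exact le_csSup ⟨X ^ (1 - α), fun y ⟨s, hs, hy⟩ => hy ▸ haxle s hs⟩
        (mem_image_of_mem ax hs0mem)
  have hastarpos : 0 < axstar t := by
    rw [hastar]; exact Real.rpow_pos_of_pos hXp _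
  have hmain : ax t / axstar t = α + (1 - α) * (x t / X) := by
    rw [div_eq_iff hastarpos.ne', hax, hastar, hid X hXp]
    field_simp
    ring
  refine ⟨hmain, ?_, ?_⟩
  · have hxt := hxnn t ht
    have : 0 ≤ (1 - α) * (x t / X) :=
      mul_nonneg h1α.le (div_nonneg hxt hXp.le)
    rw [hmain]; linarith
  · have h := hmain ▸ (by
      have hxt := hxnn t ht
      have : 0 ≤ (1 - α) * (x t / X) :=
        mul_nonneg h1α.le (div_nonneg hxt hXp.le)
      linarith : α ≤ α + (1 - α) * (x t / X))
    exact (le_div_iff₀ hastarpos).mp h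
end

section
/- Let $\alpha \in (0,1)$ and let $\chi : [0,\infty) \to [0,\infty)$ be continuous with $\chi(0)=1$ and running maximum $\chi^*$, satisfying the $\alpha$-drawdown constraint $\chi(t) \geq \alpha \chi^*(t)$ for all $t$. Define $x(t) = \frac{1}{1-\alpha}(\chi^*(t))^{\alpha/(1-\alpha)}\bigl(\chi(t) - \alpha\chi^*(t)\bigr)$. Then $x$ is nonnegative, $x(0)=1$, the running maxima satisfy $x^*(t) = (\chi^*(t))^{1/(1-\alpha)}$, and the Az\'ema--Yor transform of $x$ recovers $\chi$: $\alpha (x^*(t))^{1-\alpha} + (1-\alpha) x(t)(x^*(t))^{-\alpha} = \chi(t)$ for all $t \geq 0$. -/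
open Real Set

theorem azema_yor_inverse
    (α : ℝ) (hα0 : 0 < α) (hα1 : α < 1)
    (χ : ℝ → ℝ) (hχc : ContinuousOn χ (Set.Ici 0))
    (hχnn : ∀ t ≥ (0:ℝ), 0 ≤ χ t) (hχ0 : χ 0 = 1)
    (χstar : ℝ → ℝ) (hχstar : ∀ t, χstar t = sSup (χ '' Set.Icc 0 t))
    (hdd : ∀ t ≥ (0:ℝ), α * χstar t ≤ χ t)
    (x : ℝ → ℝ)
    (hx : ∀ t, x t = (1 / (1 - α)) * (χstar t) ^ (α / (1 - α)) * (χ t - α * χstar t))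
    (xstar : ℝ → ℝ) (hxstar : ∀ t, xstar t = sSup (x '' Set.Icc 0 t)) :
    (∀ t ≥ (0:ℝ), 0 ≤ x t) ∧ x 0 = 1 ∧
    (∀ t ≥ (0:ℝ), xstar t = (χstar t) ^ (1 / (1 - α))) ∧
    (∀ t ≥ (0:ℝ),
      α * (xstar t) ^ (1 - α) + (1 - α) * x t * (xstar t) ^ (-α) = χ t) := by
  have hα : (0:ℝ) < 1 - α := by linarith
  have hane : (1:ℝ) - α ≠ 0 := ne_of_gt hα
  have hbdd : ∀ t, 0 ≤ t → BddAbove (χ '' Icc 0 t) := fun t ht =>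
    ((isCompact_Icc).image_of_continuousOn (hχc.mono (fun s hs => hs.1))).bddAbove
  have hne : ∀ t, 0 ≤ t → (χ '' Icc 0 t).Nonempty := fun t ht =>
    ⟨χ 0, ⟨0, ⟨le_refl 0, ht⟩, rfl⟩⟩
  have hle : ∀ s t, 0 ≤ s → s ≤ t → χ s ≤ χstar t := by
    intro s t hs hst
    rw [hχstar]
    exact le_csSup (hbdd t (hs.trans hst)) ⟨s, ⟨hs, hst⟩, rfl⟩
  have h1le : ∀ t, 0 ≤ t → 1 ≤ χstar t := fun t ht => hχ0 ▸ hle 0 t le_rfl ht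
  have hpos : ∀ t, 0 ≤ t → 0 < χstar t := fun t ht => lt_of_lt_of_le one_pos (h1le t ht)
  have hmono : ∀ s t, 0 ≤ s → s ≤ t → χstar s ≤ χstar t := by
    intro s t hs hst
    rw [hχstar, hχstar]
    exact csSup_le_csSup (hbdd t (hs.trans hst)) (hne s hs)
      (image_mono (Icc_subset_Icc le_rfl hst))
  have key : ∀ M : ℝ, 0 < M → M ^ (α/(1-α)) * M = M ^ (1/(1-α)) := by
    intro M hM
    nth_rewrite 2 [← Real.rpow_one M]
    rw [← Real.rpow_add hM]
    congr 1
    field_simp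
    ring
  -- nonnegativity
  have hxnn : ∀ t, 0 ≤ t → 0 ≤ x t := by
    intro t ht
    rw [hx]
    have h1 := hdd t ht
    have h2 := hpos t ht
    apply mul_nonneg (mul_nonneg (by positivity) (Real.rpow_nonneg h2.le _)) (by linarith)
  -- x 0 = 1
  have hχstar0 : χstar 0 = 1 := by
    rw [hχstar]
    simp [Set.Icc_self, Set.image_singleton, hχ0]
  have hx0 : x 0 = 1 := by
    rw [hx, hχstar0, hχ0, Real.one_rpow]
    field_simp
  -- upper bound for x on [0,t]
  have hxle : ∀ s t, 0 ≤ s → s ≤ t → x s ≤ (χstar t) ^ (1/(1-α)) := by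
    intro s t hs hst
    rw [hx]
    have hps := hpos s hs
    have hcs : χ s ≤ χstar s := hle s s hs le_rfl
    calc (1/(1-α)) * (χstar s)^(α/(1-α)) * (χ s - α * χstar s)
        ≤ (1/(1-α)) * (χstar s)^(α/(1-α)) * ((1-α) * χstar s) := by
          apply mul_le_mul_of_nonneg_left (by linarith) (by positivity)
      _ = (χstar s) ^ (α/(1-α)) * χstar s := by field_simp
      _ = (χstar s) ^ (1/(1-α)) := key _ hps
      _ ≤ (χstar t) ^ (1/(1-α)) := Real.rpow_le_rpow hps.le (hmono s t hs hst) (by positivity)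
  -- attainment
  have hx_attain : ∀ t, 0 ≤ t → ∃ s ∈ Icc (0:ℝ) t, x s = (χstar t) ^ (1/(1-α)) := by
    intro t ht
    obtain ⟨s0, hs0, hmax⟩ := isCompact_Icc.exists_isMaxOn (nonempty_Icc.mpr ht)
      (hχc.mono (fun s hs => hs.1))
    have hχs0 : χ s0 = χstar t := by
      apply le_antisymm (hle s0 t hs0.1 hs0.2)
      rw [hχstar]
      exact csSup_le (hne t ht) (fun y ⟨s, hs, hy⟩ => hy ▸ hmax hs)
    have hstareq : χstar s0 = χstar t := le_antisymm (hmono s0 t hs0.1 hs0.2)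
      (by rw [← hχs0]; exact hle s0 s0 hs0.1 le_rfl)
    refine ⟨s0, hs0, ?_⟩
    rw [hx, hstareq, hχs0]
    have hpt := hpos t ht
    calc (1/(1-α)) * (χstar t)^(α/(1-α)) * (χstar t - α * χstar t)
        = (χstar t)^(α/(1-α)) * χstar t := by field_simp
      _ = (χstar t) ^ (1/(1-α)) := key _ hpt
  have hxstareq : ∀ t, 0 ≤ t → xstar t = (χstar t) ^ (1/(1-α)) := by
    intro t ht
    rw [hxstar]
    obtain ⟨s0, hs0, heq⟩ := hx_attain t ht
    apply le_antisymm
    · exact csSup_le (Set.Nonempty.image _ (nonempty_Icc.mpr ht))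
        (fun y ⟨s, hs, hy⟩ => hy ▸ hxle s t hs.1 hs.2)
    · rw [← heq]
      exact le_csSup ⟨(χstar t)^(1/(1-α)), fun y ⟨s, hs, hy⟩ => hy ▸ hxle s t hs.1 hs.2⟩
        ⟨s0, hs0, rfl⟩
  refine ⟨fun t ht => hxnn t ht, hx0, fun t ht => hxstareq t ht, ?_⟩
  intro t ht
  have hM := hpos t ht
  rw [hxstareq t ht, hx, ← Real.rpow_mul hM.le, ← Real.rpow_mul hM.le]
  have h2 : (χstar t) ^ (α/(1-α)) * (χstar t) ^ ((1/(1-α))*(-α)) = 1 := by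
    rw [← Real.rpow_add hM, show α/(1-α) + (1/(1-α))*(-α) = 0 by ring, Real.rpow_zero]
  have h3 : (1-α) * (1/(1-α)) = 1 := by field_simp
  calc α * (χstar t) ^ ((1/(1-α))*(1-α))
        + (1-α) * ((1/(1-α)) * (χstar t)^(α/(1-α)) * (χ t - α * χstar t))
          * (χstar t)^((1/(1-α))*(-α))
      = α * (χstar t) ^ (1:ℝ)
        + ((1-α)*(1/(1-α))) * ((χstar t)^(α/(1-α)) * (χstar t)^((1/(1-α))*(-α)))
          * (χ t - α * χstar t) := by
        rw [show (1/(1-α))*(1-α) = 1 by field_simp]; ring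
    _ = α * χstar t + 1 * 1 * (χ t - α * χstar t) := by
        rw [h2, h3, Real.rpow_one]
    _ = χ t := by ring
end

section
/- Let $x, \hat{x} : [0,\infty) \to (0,\infty)$ be continuous functions with $\lim_{t\to\infty} \hat{x}(t) = \infty$, and suppose $\lim_{t\to\infty} x(t)/\hat{x}(t) = L$ for some $L \in (0,\infty)$. Then the running maxima satisfy $\lim_{t\to\infty} x^*(t)/\hat{x}^*(t) = L$, where $x^*(t) = \sup_{s\in[0,t]} x(s)$ and $\hat{x}^*(t) = \sup_{s\in[0,t]} \hat{x}(s)$. -/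
open Real Set Filter

theorem running_max_ratio_limit
    (x xh : ℝ → ℝ)
    (hxc : ContinuousOn x (Set.Ici 0)) (hxhc : ContinuousOn xh (Set.Ici 0))
    (hxpos : ∀ t ≥ (0:ℝ), 0 < x t) (hxhpos : ∀ t ≥ (0:ℝ), 0 < xh t)
    (hxhinf : Filter.Tendsto xh Filter.atTop Filter.atTop)
    (L : ℝ) (hL : 0 < L)
    (hlim : Filter.Tendsto (fun t => x t / xh t) Filter.atTop (nhds L))
    (xstar xhstar : ℝ → ℝ)
    (hxstar : ∀ t, xstar t = sSup (x '' Set.Icc 0 t))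
    (hxhstar : ∀ t, xhstar t = sSup (xh '' Set.Icc 0 t)) :
    Filter.Tendsto (fun t => xstar t / xhstar t) Filter.atTop (nhds L) := by
  have bddx : ∀ t : ℝ, BddAbove (x '' Set.Icc 0 t) := fun t =>
    ((isCompact_Icc).image_of_continuousOn (hxc.mono Set.Icc_subset_Ici_self)).bddAbove
  have bddxh : ∀ t : ℝ, BddAbove (xh '' Set.Icc 0 t) := fun t =>
    ((isCompact_Icc).image_of_continuousOn (hxhc.mono Set.Icc_subset_Ici_self)).bddAbove
  rw [Metric.tendsto_atTop]
  intro ε hε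
  set ε' : ℝ := min (ε / 2) (L / 2) with hε'def
  have hε' : 0 < ε' := lt_min (by linarith) (by linarith)
  have hε'ε : ε' < ε := lt_of_le_of_lt (min_le_left _ _) (by linarith)
  have hLε' : 0 < L - ε' := by
    have : ε' ≤ L / 2 := min_le_right _ _
    linarith
  -- get T₀ ≥ 0 with ratio close for s ≥ T₀
  obtain ⟨T₀', hT₀'⟩ := Metric.tendsto_atTop.mp hlim ε' hε'
  set T₀ : ℝ := max T₀' 0 with hT₀def
  have hT₀0 : (0:ℝ) ≤ T₀ := le_max_right _ _
  have hratio : ∀ s ≥ T₀, (L - ε') * xh s ≤ x s ∧ x s ≤ (L + ε') * xh s := by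
    intro s hs
    have hs0 : (0:ℝ) ≤ s := le_trans hT₀0 hs
    have h := hT₀' s (le_trans (le_max_left _ _) hs)
    rw [Real.dist_eq, abs_lt] at h
    have hxhs := hxhpos s hs0
    constructor
    · have : L - ε' ≤ x s / xh s := by linarith
      calc (L - ε') * xh s ≤ (x s / xh s) * xh s := by nlinarith
        _ = x s := by field_simp
    · have : x s / xh s ≤ L + ε' := by linarith
      calc x s = (x s / xh s) * xh s := by field_simp
        _ ≤ (L + ε') * xh s := by nlinarith
  set C : ℝ := sSup (x '' Set.Icc 0 T₀) with hCdef
  set Ch : ℝ := sSup (xh '' Set.Icc 0 T₀) with hChdef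
  have hC : ∀ s ∈ Set.Icc (0:ℝ) T₀, x s ≤ C := fun s hs =>
    le_csSup (bddx T₀) (Set.mem_image_of_mem _ hs)
  have hCh : ∀ s ∈ Set.Icc (0:ℝ) T₀, xh s ≤ Ch := fun s hs =>
    le_csSup (bddxh T₀) (Set.mem_image_of_mem _ hs)
  -- get T₁ ≥ T₀ with xh t large
  obtain ⟨T₁', hT₁'⟩ := eventually_atTop.mp (hxhinf.eventually_ge_atTop (max Ch (C / (L - ε'))))
  set T₁ : ℝ := max T₁' T₀ with hT₁def
  refine ⟨T₁, fun t ht => ?_⟩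
  have htT₀ : T₀ ≤ t := le_trans (le_max_right _ _) ht
  have ht0 : (0:ℝ) ≤ t := le_trans hT₀0 htT₀
  have hxht : max Ch (C / (L - ε')) ≤ xh t := hT₁' t (le_trans (le_max_left _ _) ht)
  have hxhtCh : Ch ≤ xh t := le_trans (le_max_left _ _) hxht
  have hxhtC : C / (L - ε') ≤ xh t := le_trans (le_max_right _ _) hxht
  have hmemt : xh t ∈ xh '' Set.Icc 0 t := Set.mem_image_of_mem _ ⟨ht0, le_refl t⟩
  have hxhstar_ge : xh t ≤ xhstar t := by rw [hxhstar]; exact le_csSup (bddxh t) hmemt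
  have hxstar_ge : x t ≤ xstar t := by
    rw [hxstar]; exact le_csSup (bddx t) (Set.mem_image_of_mem _ ⟨ht0, le_refl t⟩)
  have hxhstar_pos : 0 < xhstar t := lt_of_lt_of_le (hxhpos t ht0) hxhstar_ge
  -- upper bound: xstar t ≤ (L + ε') * xhstar t
  have hupper : xstar t ≤ (L + ε') * xhstar t := by
    rw [hxstar]
    apply csSup_le (Set.Nonempty.image _ ⟨0, Set.mem_Icc.mpr ⟨le_refl 0, ht0⟩⟩)
    rintro _ ⟨s, hs, rfl⟩
    rcases le_or_gt s T₀ with hsT | hsT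
    · have h1 : x s ≤ C := hC s ⟨hs.1, hsT⟩
      have h2 : C ≤ (L - ε') * xh t := by
        rw [div_le_iff₀ hLε'] at hxhtC; linarith [mul_comm (xh t) (L - ε')]
      have h3 : xh t ≤ xhstar t := hxhstar_ge
      nlinarith [hε'.le, hxhpos t ht0]
    · have h1 : x s ≤ (L + ε') * xh s := (hratio s hsT.le).2
      have h2 : xh s ≤ xhstar t := by
        rw [hxhstar]; exact le_csSup (bddxh t) (Set.mem_image_of_mem _ hs)
      nlinarith [hε'.le, hL]
  -- lower bound: (L - ε') * xhstar t ≤ xstar t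
  have hlower : (L - ε') * xhstar t ≤ xstar t := by
    have key : xhstar t ≤ xstar t / (L - ε') := by
      rw [hxhstar]
      apply csSup_le (Set.Nonempty.image _ ⟨0, Set.mem_Icc.mpr ⟨le_refl 0, ht0⟩⟩)
      rintro _ ⟨s, hs, rfl⟩
      rw [le_div_iff₀ hLε']
      rcases le_or_gt s T₀ with hsT | hsT
      · have h1 : xh s ≤ Ch := hCh s ⟨hs.1, hsT⟩
        have h2 : (L - ε') * xh t ≤ x t := (hratio t htT₀).1
        nlinarith
      · have h1 : (L - ε') * xh s ≤ x s := (hratio s hsT.le).1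
        have h2 : x s ≤ xstar t := by
          rw [hxstar]; exact le_csSup (bddx t) (Set.mem_image_of_mem _ hs)
        nlinarith [mul_comm (xh s) (L - ε')]
    calc (L - ε') * xhstar t ≤ (L - ε') * (xstar t / (L - ε')) :=
          mul_le_mul_of_nonneg_left key hLε'.le
      _ = xstar t := by field_simp
  rw [Real.dist_eq, abs_lt]
  constructor
  · have : L - ε' ≤ xstar t / xhstar t := (le_div_iff₀ hxhstar_pos).mpr (by linarith [hlower])
    linarith
  · have : xstar t / xhstar t ≤ L + ε' := (div_le_iff₀ hxhstar_pos).mpr (by linarith [hupper])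
    linarith
end

section
/- Let $x, \hat{x} : [0,\infty) \to (0,\infty)$ be continuous with $\lim_{t\to\infty}\hat{x}(t) = \infty$ and $\lim_{t\to\infty} x(t)/\hat{x}(t) = L \in (0,\infty)$, and assume $x(0)=\hat{x}(0)=1$. Fix $\alpha \in (0,1)$ and let ${}^{\alpha}x, {}^{\alpha}\hat{x}$ be the Az\'ema--Yor transforms ${}^{\alpha}x = \alpha (x^*)^{1-\alpha} + (1-\alpha)x(x^*)^{-\alpha}$ and similarly for $\hat{x}$. Then $\lim_{t\to\infty} \frac{{}^{\alpha}x(t)}{{}^{\alpha}\hat{x}(t)} = L^{1-\alpha}$. -/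
open Real Set Filter

private lemma star_bdd {y : ℝ → ℝ} (hc : ContinuousOn y (Ici 0)) {t : ℝ} (ht : 0 ≤ t) :
    BddAbove (y '' Icc 0 t) :=
  (isCompact_Icc.image_of_continuousOn (hc.mono Icc_subset_Ici_self)).bddAbove

private lemma le_star {y : ℝ → ℝ} (hc : ContinuousOn y (Ici 0)) {s t : ℝ}
    (hs : s ∈ Icc (0:ℝ) t) : y s ≤ sSup (y '' Icc 0 t) :=
  le_csSup (star_bdd hc (hs.1.trans hs.2)) (mem_image_of_mem _ hs)

private lemma star_ratio_tendsto
    (x xh : ℝ → ℝ)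
    (hxc : ContinuousOn x (Ici 0)) (hxhc : ContinuousOn xh (Ici 0))
    (hxhpos : ∀ t ≥ (0:ℝ), 0 < xh t)
    (hx0 : x 0 = 1)
    (hxhinf : Tendsto xh atTop atTop)
    (L : ℝ) (hL : 0 < L)
    (hlim : Tendsto (fun t => x t / xh t) atTop (nhds L)) :
    Tendsto (fun t => sSup (x '' Icc 0 t) / sSup (xh '' Icc 0 t)) atTop (nhds L) := by
  rw [Metric.tendsto_atTop]
  intro ε hε
  set ε' := min (ε/2) (L/2) with hε'def
  have hε'pos : 0 < ε' := lt_min (by linarith) (by linarith)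
  have hε'ε : ε' < ε := lt_of_le_of_lt (min_le_left _ _) (by linarith)
  have hLε' : 0 < L - ε' := by
    have : ε' ≤ L/2 := min_le_right _ _
    linarith
  have hLε'' : 0 < L + ε' := by linarith
  obtain ⟨T₀, hT₀⟩ := (Metric.tendsto_atTop.mp hlim) ε' hε'pos
  set T := max T₀ 0 with hTdef
  have hT0 : (0:ℝ) ≤ T := le_max_right _ _
  have hratio : ∀ s, T ≤ s → (L - ε') * xh s ≤ x s ∧ x s ≤ (L + ε') * xh s := by
    intro s hs
    have hs0 : (0:ℝ) ≤ s := le_trans hT0 hs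
    have h := hT₀ s (le_trans (le_max_left _ _) hs)
    rw [Real.dist_eq, abs_lt] at h
    have hxhs := hxhpos s hs0
    have hxs : x s = (x s / xh s) * xh s := by field_simp
    constructor
    · nlinarith [h.1]
    · nlinarith [h.2]
  set M := sSup (x '' Icc 0 T) with hMdef
  set Mh := sSup (xh '' Icc 0 T) with hMhdef
  have hM0 : (0:ℝ) < M := by
    have := le_star hxc (show (0:ℝ) ∈ Icc 0 T from ⟨le_refl _, hT0⟩)
    rw [hx0] at this; linarith
  obtain ⟨N, hN⟩ := (hxhinf.eventually_ge_atTop (max Mh (M / (L + ε')))).exists_forall_of_atTop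
  refine ⟨max N T, fun t ht => ?_⟩
  have hTt : T ≤ t := le_trans (le_max_right _ _) ht
  have ht0 : (0:ℝ) ≤ t := le_trans hT0 hTt
  have hNt := hN t (le_trans (le_max_left _ _) ht)
  have hxht_Mh : Mh ≤ xh t := le_trans (le_max_left _ _) hNt
  have hxht_M : M / (L + ε') ≤ xh t := le_trans (le_max_right _ _) hNt
  have hxht : 0 < xh t := hxhpos t ht0
  -- sSup over subinterval
  have hBx : BddAbove (x '' Icc T t) :=
    (isCompact_Icc.image_of_continuousOn
      (hxc.mono (fun s hs => le_trans hT0 hs.1))).bddAbove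
  have hBh : BddAbove (xh '' Icc T t) :=
    (isCompact_Icc.image_of_continuousOn
      (hxhc.mono (fun s hs => le_trans hT0 hs.1))).bddAbove
  have hnex : (x '' Icc T t).Nonempty := ⟨x T, mem_image_of_mem _ (left_mem_Icc.mpr hTt)⟩
  have hneh : (xh '' Icc T t).Nonempty := ⟨xh T, mem_image_of_mem _ (left_mem_Icc.mpr hTt)⟩
  set Sx := sSup (x '' Icc T t) with hSxdef
  set Sh := sSup (xh '' Icc T t) with hShdef
  have hsplitx : sSup (x '' Icc 0 t) = M ⊔ Sx := by
    rw [← Icc_union_Icc_eq_Icc hT0 hTt, image_union]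
    exact csSup_union (star_bdd hxc hT0) ⟨x 0, mem_image_of_mem _ ⟨le_refl _, hT0⟩⟩ hBx hnex
  have hsplith : sSup (xh '' Icc 0 t) = Mh ⊔ Sh := by
    rw [← Icc_union_Icc_eq_Icc hT0 hTt, image_union]
    exact csSup_union (star_bdd hxhc hT0) ⟨xh 0, mem_image_of_mem _ ⟨le_refl _, hT0⟩⟩ hBh hneh
  have hxhtSh : xh t ≤ Sh := le_csSup hBh (mem_image_of_mem _ (right_mem_Icc.mpr hTt))
  have hShpos : 0 < Sh := lt_of_lt_of_le hxht hxhtSh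
  have hsplith' : sSup (xh '' Icc 0 t) = Sh := by
    rw [hsplith, sup_eq_right.mpr (le_trans hxht_Mh hxhtSh)]
  -- upper bound on Sx
  have hSxle : Sx ≤ (L + ε') * Sh := by
    apply csSup_le hnex
    rintro v ⟨s, hs, rfl⟩
    have h1 := (hratio s hs.1).2
    have h2 : xh s ≤ Sh := le_csSup hBh (mem_image_of_mem _ hs)
    nlinarith
  -- lower bound on Sx
  have hShle : Sh ≤ Sx / (L - ε') := by
    apply csSup_le hneh
    rintro v ⟨s, hs, rfl⟩
    have h1 := (hratio s hs.1).1
    have h2 : x s ≤ Sx := le_csSup hBx (mem_image_of_mem _ hs)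
    rw [le_div_iff₀ hLε']
    nlinarith
  have hSxge : (L - ε') * Sh ≤ Sx := by
    rw [le_div_iff₀ hLε'] at hShle; linarith [hShle]
  have hMle : M ≤ (L + ε') * Sh := by
    rw [div_le_iff₀ hLε''] at hxht_M
    nlinarith
  have hupper : sSup (x '' Icc 0 t) ≤ (L + ε') * Sh := by
    rw [hsplitx]; exact sup_le hMle hSxle
  have hlower : (L - ε') * Sh ≤ sSup (x '' Icc 0 t) := by
    rw [hsplitx]; exact le_trans hSxge le_sup_right
  rw [hsplith', Real.dist_eq]
  have h1 : sSup (x '' Icc 0 t) / Sh ≤ L + ε' := by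
    rw [div_le_iff₀ hShpos]; linarith
  have h2 : L - ε' ≤ sSup (x '' Icc 0 t) / Sh := by
    rw [le_div_iff₀ hShpos]; linarith
  have : |sSup (x '' Icc 0 t) / Sh - L| ≤ ε' := abs_le.mpr ⟨by linarith, by linarith⟩
  linarith

theorem azema_yor_ratio_limit
    (α : ℝ) (hα0 : 0 < α) (hα1 : α < 1)
    (x xh : ℝ → ℝ)
    (hxc : ContinuousOn x (Set.Ici 0)) (hxhc : ContinuousOn xh (Set.Ici 0))
    (hxpos : ∀ t ≥ (0:ℝ), 0 < x t) (hxhpos : ∀ t ≥ (0:ℝ), 0 < xh t)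
    (hx0 : x 0 = 1) (hxh0 : xh 0 = 1)
    (hxhinf : Filter.Tendsto xh Filter.atTop Filter.atTop)
    (L : ℝ) (hL : 0 < L)
    (hlim : Filter.Tendsto (fun t => x t / xh t) Filter.atTop (nhds L))
    (xstar xhstar : ℝ → ℝ)
    (hxstar : ∀ t, xstar t = sSup (x '' Set.Icc 0 t))
    (hxhstar : ∀ t, xhstar t = sSup (xh '' Set.Icc 0 t))
    (ax axh : ℝ → ℝ)
    (hax : ∀ t, ax t = α * (xstar t) ^ (1 - α) + (1 - α) * x t * (xstar t) ^ (-α))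
    (haxh : ∀ t, axh t = α * (xhstar t) ^ (1 - α) + (1 - α) * xh t * (xhstar t) ^ (-α)) :
    Filter.Tendsto (fun t => ax t / axh t) Filter.atTop (nhds (L ^ (1 - α))) := by
  -- basic facts about running maxima
  have hx1 : ∀ t, 0 ≤ t → 1 ≤ xstar t := by
    intro t ht
    rw [hxstar t, ← hx0]
    exact le_star hxc ⟨le_refl _, ht⟩
  have hxh1 : ∀ t, 0 ≤ t → 1 ≤ xhstar t := by
    intro t ht
    rw [hxhstar t, ← hxh0]
    exact le_star hxhc ⟨le_refl _, ht⟩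
  have hxle : ∀ t, 0 ≤ t → x t ≤ xstar t := by
    intro t ht
    rw [hxstar t]; exact le_star hxc ⟨ht, le_refl _⟩
  have hxhle : ∀ t, 0 ≤ t → xh t ≤ xhstar t := by
    intro t ht
    rw [hxhstar t]; exact le_star hxhc ⟨ht, le_refl _⟩
  -- ratio of maxima tends to L
  have hA : Tendsto (fun t => xstar t / xhstar t) atTop (nhds L) :=
    (star_ratio_tendsto x xh hxc hxhc hxhpos hx0 hxhinf L hL hlim).congr
      (fun t => by rw [hxstar, hxhstar])
  -- inverse ratio
  have hAinv : Tendsto (fun t => xhstar t / xstar t) atTop (nhds L⁻¹) :=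
    (hA.inv₀ hL.ne').congr (fun t => by rw [inv_div])
  -- ratio of drawdowns tends to 1
  have hDD : Tendsto (fun t => (x t / xstar t) / (xh t / xhstar t)) atTop (nhds 1) := by
    have h := hlim.mul hAinv
    rw [mul_inv_cancel₀ hL.ne'] at h
    apply h.congr' ?_
    filter_upwards [eventually_ge_atTop (0:ℝ)] with t ht
    have h1 : xh t ≠ 0 := (hxhpos t ht).ne'
    have h2 : xstar t ≠ 0 := by have := hx1 t ht; linarith
    have h3 : xhstar t ≠ 0 := by have := hxh1 t ht; linarith
    field_simp
  -- difference of drawdowns tends to 0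
  have hdiff : Tendsto (fun t => (x t / xstar t) - (xh t / xhstar t)) atTop (nhds 0) := by
    apply squeeze_zero_norm' (a := fun t => |(x t / xstar t) / (xh t / xhstar t) - 1|)
    · filter_upwards [eventually_ge_atTop (0:ℝ)] with t ht
      have h3 : (0:ℝ) < xhstar t := by have := hxh1 t ht; linarith
      have hDhpos : 0 < xh t / xhstar t := div_pos (hxhpos t ht) h3
      have hDhle : xh t / xhstar t ≤ 1 := (div_le_one h3).mpr (hxhle t ht)
      have h1 : xh t ≠ 0 := (hxhpos t ht).ne'
      have h2 : xstar t ≠ 0 := by have := hx1 t ht; linarith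
      have key : (x t / xstar t) - (xh t / xhstar t)
          = (xh t / xhstar t) * ((x t / xstar t) / (xh t / xhstar t) - 1) := by
        field_simp
      rw [Real.norm_eq_abs, key, abs_mul, abs_of_pos hDhpos]
      nlinarith [abs_nonneg ((x t / xstar t) / (xh t / xhstar t) - 1)]
    · have := (tendsto_sub_nhds_zero_iff.mpr hDD).abs
      simpa using this
  -- correction factor tends to 1
  have hND : Tendsto (fun t =>
      (α + (1 - α) * (x t / xstar t)) / (α + (1 - α) * (xh t / xhstar t)))
      atTop (nhds 1) := by
    rw [← tendsto_sub_nhds_zero_iff]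
    apply squeeze_zero_norm' (a := fun t => ((1 - α)/α) * |(x t / xstar t) - (xh t / xhstar t)|)
    · filter_upwards [eventually_ge_atTop (0:ℝ)] with t ht
      have h3 : (0:ℝ) < xhstar t := by have := hxh1 t ht; linarith
      have hDhpos : 0 < xh t / xhstar t := div_pos (hxhpos t ht) h3
      have hDnpos : 0 < α + (1 - α) * (xh t / xhstar t) := by nlinarith
      have hDnge : α ≤ α + (1 - α) * (xh t / xhstar t) := by nlinarith
      have h2 : xstar t ≠ 0 := by have := hx1 t ht; linarith
      have hDn : α + (1 - α) * (xh t / xhstar t) ≠ 0 := hDnpos.ne'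
      have key : (α + (1 - α) * (x t / xstar t)) / (α + (1 - α) * (xh t / xhstar t)) - 1
          = ((1 - α) * ((x t / xstar t) - (xh t / xhstar t)))
            / (α + (1 - α) * (xh t / xhstar t)) := by
        rw [div_sub_one hDn]
        congr 1
        ring
      rw [Real.norm_eq_abs, key, abs_div, abs_of_pos hDnpos, abs_mul,
        abs_of_pos (show (0:ℝ) < 1 - α by linarith)]
      rw [div_le_iff₀ hDnpos]
      have habs : (0:ℝ) ≤ |(x t / xstar t) - (xh t / xhstar t)| := abs_nonneg _
      have hc : ((1 - α)/α) * |(x t / xstar t) - (xh t / xhstar t)| * α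
          = (1 - α) * |(x t / xstar t) - (xh t / xhstar t)| := by field_simp
      have hcpos : (0:ℝ) ≤ ((1 - α)/α) * |(x t / xstar t) - (xh t / xhstar t)| :=
        mul_nonneg (div_nonneg (by linarith) hα0.le) (abs_nonneg _)
      nlinarith [mul_le_mul_of_nonneg_left hDnge hcpos]
    · have habs0 : Tendsto (fun t => |(x t / xstar t) - (xh t / xhstar t)|) atTop (nhds 0) := by
        simpa using hdiff.abs
      have : Tendsto (fun t => ((1 - α)/α) * |(x t / xstar t) - (xh t / xhstar t)|)
          atTop (nhds (((1 - α)/α) * 0)) := tendsto_const_nhds.mul habs0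
      simpa using this
  -- power factor
  have hrpow : Tendsto (fun t => (xstar t / xhstar t) ^ (1 - α)) atTop
      (nhds (L ^ (1 - α))) := hA.rpow_const (Or.inl hL.ne')
  have hmain := hrpow.mul hND
  rw [mul_one] at hmain
  apply hmain.congr' ?_
  filter_upwards [eventually_ge_atTop (0:ℝ)] with t ht
  have hP : (0:ℝ) < xstar t := by have := hx1 t ht; linarith
  have hQ : (0:ℝ) < xhstar t := by have := hxh1 t ht; linarith
  have hfac : ∀ (P v : ℝ), 0 < P →
      P ^ (1 - α) * (α + (1 - α) * (v / P)) = α * P ^ (1 - α) + (1 - α) * v * P ^ (-α) := by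
    intro P v hPpos
    have h1 : P ^ (1 - α) = P ^ (-α) * P := by
      rw [show (1 - α) = -α + 1 by ring, Real.rpow_add_one hPpos.ne']
    rw [h1]
    field_simp
  rw [hax t, haxh t, ← hfac _ _ hP, ← hfac _ _ hQ,
    Real.div_rpow hP.le hQ.le, div_mul_div_comm]
end

section
/- Let $g : [0,\infty) \to [0,\infty)$ be nondecreasing with $\lim_{t\to\infty} g(t) = \infty$, and let $x : [0,\infty) \to (0,\infty)$ be continuous with $\lim_{t\to\infty} x(t) = \infty$ and $\lim_{t\to\infty} \log(x(t))/g(t) = 1$. Then also $\lim_{t\to\infty} \log(x^*(t))/g(t) = 1$, where $x^*(t) = \sup_{s\in[0,t]} x(s)$. -/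
open Real Set Filter

theorem running_max_growth_rate
    (g : ℝ → ℝ) (hgnn : ∀ t ≥ (0:ℝ), 0 ≤ g t)
    (hgmono : MonotoneOn g (Set.Ici 0))
    (hginf : Filter.Tendsto g Filter.atTop Filter.atTop)
    (x : ℝ → ℝ) (hxc : ContinuousOn x (Set.Ici 0))
    (hxpos : ∀ t ≥ (0:ℝ), 0 < x t)
    (hxinf : Filter.Tendsto x Filter.atTop Filter.atTop)
    (hlim : Filter.Tendsto (fun t => Real.log (x t) / g t) Filter.atTop (nhds 1))
    (xstar : ℝ → ℝ) (hxstar : ∀ t, xstar t = sSup (x '' Set.Icc 0 t)) :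
    Filter.Tendsto (fun t => Real.log (xstar t) / g t) Filter.atTop (nhds 1) := by
  rw [Metric.tendsto_nhds]
  intro ε hε
  have h1 : ∀ᶠ t in atTop, |Real.log (x t) / g t - 1| < ε/2 := by
    have := Metric.tendsto_nhds.mp hlim (ε/2) (by positivity)
    simpa [Real.dist_eq] using this
  have h2 : ∀ᶠ t in atTop, 1 ≤ g t := hginf.eventually_ge_atTop 1
  obtain ⟨T, hT⟩ := eventually_atTop.mp (h1.and h2)
  set T' : ℝ := max T 0 with hT'def
  have hT'0 : (0:ℝ) ≤ T' := le_max_right _ _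
  have hTT' : T ≤ T' := le_max_left _ _
  set M : ℝ := sSup (x '' Set.Icc 0 T') with hM
  have h4 : ∀ᶠ t in atTop, Real.log M ≤ g t := hginf.eventually_ge_atTop _
  filter_upwards [h1, h2, h4, eventually_ge_atTop T'] with t ht1 ht2 ht4 ht5
  have ht0 : (0:ℝ) ≤ t := le_trans hT'0 ht5
  have hgt : (0:ℝ) < g t := lt_of_lt_of_le one_pos ht2
  -- maximizer on [0,t]
  have hcont : ContinuousOn x (Set.Icc 0 t) := hxc.mono Icc_subset_Ici_self
  obtain ⟨ρ, hρmem, hρmax⟩ := isCompact_Icc.exists_isMaxOn ⟨0, le_refl 0, ht0⟩ hcont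
  have hsup : xstar t = x ρ := by
    rw [hxstar]
    refine IsGreatest.csSup_eq ⟨Set.mem_image_of_mem _ hρmem, ?_⟩
    rintro y ⟨s, hs, rfl⟩
    exact hρmax hs
  have hxρpos : 0 < x ρ := hxpos ρ hρmem.1
  have hxt : x t ≤ x ρ := hρmax ⟨ht0, le_refl t⟩
  -- lower bound
  have hlow : Real.log (x t) / g t ≤ Real.log (xstar t) / g t := by
    rw [hsup]
    have : Real.log (x t) ≤ Real.log (x ρ) := Real.log_le_log (hxpos t ht0) hxt
    gcongr
  -- upper bound : log (x ρ) ≤ (1 + ε/2) * g t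
  have hup : Real.log (x ρ) ≤ (1 + ε/2) * g t := by
    rcases le_or_gt T' ρ with hρT | hρT
    · have hρT2 : T ≤ ρ := le_trans hTT' hρT
      obtain ⟨hρ1, hρ2⟩ := hT ρ hρT2
      have hgρ : (0:ℝ) < g ρ := lt_of_lt_of_le one_pos hρ2
      have : Real.log (x ρ) / g ρ ≤ 1 + ε/2 := by
        have := (abs_sub_lt_iff.mp hρ1).1
        linarith
      have h5 : Real.log (x ρ) ≤ (1 + ε/2) * g ρ := by
        rw [div_le_iff₀ hgρ] at this
        linarith [this]
      refine h5.trans ?_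
      have : g ρ ≤ g t := hgmono hρmem.1 (Set.mem_Ici.mpr ht0) hρmem.2
      nlinarith
    · have hbdd : BddAbove (x '' Set.Icc 0 T') :=
        (isCompact_Icc.image_of_continuousOn (hxc.mono Icc_subset_Ici_self)).bddAbove
      have hxρM : x ρ ≤ M :=
        le_csSup hbdd (Set.mem_image_of_mem _ ⟨hρmem.1, hρT.le⟩)
      have : Real.log (x ρ) ≤ Real.log M := Real.log_le_log hxρpos hxρM
      have h6 : Real.log (x ρ) ≤ g t := this.trans ht4
      nlinarith
  have hupper : Real.log (xstar t) / g t ≤ 1 + ε/2 := by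
    rw [hsup, div_le_iff₀ hgt]
    linarith
  have hlower : 1 - ε/2 < Real.log (x t) / g t := by
    have := (abs_sub_lt_iff.mp ht1).2
    linarith
  rw [Real.dist_eq, abs_sub_lt_iff]
  constructor <;> linarith
end

section
/- Let $g : [0,\infty) \to (0,\infty)$ be nondecreasing with $g(t)\to\infty$, let $\hat{x} : [0,\infty)\to(0,\infty)$ be continuous with $\hat{x}(0)=1$, $\hat{x}(t)\to\infty$ and $\lim_{t\to\infty}\log(\hat{x}(t))/g(t) = 1$. Fix $\alpha\in(0,1)$ and let ${}^{\alpha}\hat{x} = \alpha(\hat{x}^*)^{1-\alpha} + (1-\alpha)\hat{x}(\hat{x}^*)^{-\alpha}$. Then $\lim_{t\to\infty} \log({}^{\alpha}\hat{x}(t))/g(t) = 1-\alpha$. -/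
open Real Set Filter

theorem constrained_growth_rate
    (α : ℝ) (hα0 : 0 < α) (hα1 : α < 1)
    (g : ℝ → ℝ) (hgpos : ∀ t ≥ (0:ℝ), 0 < g t)
    (hgmono : MonotoneOn g (Set.Ici 0))
    (hginf : Filter.Tendsto g Filter.atTop Filter.atTop)
    (xh : ℝ → ℝ) (hxhc : ContinuousOn xh (Set.Ici 0))
    (hxhpos : ∀ t ≥ (0:ℝ), 0 < xh t) (hxh0 : xh 0 = 1)
    (hxhinf : Filter.Tendsto xh Filter.atTop Filter.atTop)
    (hlim : Filter.Tendsto (fun t => Real.log (xh t) / g t) Filter.atTop (nhds 1))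
    (xhstar : ℝ → ℝ) (hxhstar : ∀ t, xhstar t = sSup (xh '' Set.Icc 0 t))
    (axh : ℝ → ℝ)
    (haxh : ∀ t, axh t = α * (xhstar t) ^ (1 - α) + (1 - α) * xh t * (xhstar t) ^ (-α)) :
    Filter.Tendsto (fun t => Real.log (axh t) / g t) Filter.atTop
      (nhds (1 - α)) := by
  have hbdd : ∀ t ≥ (0:ℝ), BddAbove (xh '' Set.Icc 0 t) := by
    intro t ht
    exact ((isCompact_Icc).image_of_continuousOn
      (hxhc.mono (fun s hs => hs.1))).bddAbove
  have hmem : ∀ t ≥ (0:ℝ), ∀ s ∈ Set.Icc (0:ℝ) t, xh s ≤ xhstar t := by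
    intro t ht s hs
    rw [hxhstar]
    exact le_csSup (hbdd t ht) ⟨s, hs, rfl⟩
  have hone : ∀ t ≥ (0:ℝ), 1 ≤ xhstar t := by
    intro t ht
    have := hmem t ht 0 ⟨le_refl 0, ht⟩
    rwa [hxh0] at this
  have hle : ∀ t ≥ (0:ℝ), xh t ≤ xhstar t := fun t ht => hmem t ht t ⟨ht, le_refl t⟩
  have hSpos : ∀ t ≥ (0:ℝ), 0 < xhstar t := fun t ht => lt_of_lt_of_le one_pos (hone t ht)
  -- limit of log xhstar / g
  have hstarlim : Tendsto (fun t => Real.log (xhstar t) / g t) atTop (nhds 1) := by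
    rw [tendsto_order]
    constructor
    · intro a ha
      filter_upwards [hlim.eventually (eventually_gt_nhds ha), eventually_ge_atTop (0:ℝ)]
        with t h1 ht
      refine lt_of_lt_of_le h1 ?_
      have hlog : Real.log (xh t) ≤ Real.log (xhstar t) :=
        Real.log_le_log (hxhpos t ht) (hle t ht)
      exact div_le_div_of_nonneg_right hlog (hgpos t ht).le
    · intro b hb
      set c := (1 + b) / 2 with hc
      have hc1 : 1 < c := by simp [hc]; linarith
      have hcb : c < b := by simp [hc]; linarith
      have hcpos : 0 < c := lt_trans one_pos hc1
      have hev : ∀ᶠ s in atTop, Real.log (xh s) / g s < c :=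
        hlim.eventually (eventually_lt_nhds hc1)
      rcases (hev.and (eventually_ge_atTop (0:ℝ))).exists_forall_of_atTop with ⟨T, hT⟩
      have hT0 : (0:ℝ) ≤ T ∨ True := Or.inr trivial
      -- we may assume T ≥ 0 by replacing by max T 0
      set T' := max T 0 with hT'
      have hT'0 : (0:ℝ) ≤ T' := le_max_right _ _
      set M := xhstar T' with hM
      have hM1 : 1 ≤ M := hone T' hT'0
      filter_upwards [eventually_ge_atTop T', hginf.eventually (eventually_gt_atTop (Real.log M)),
        eventually_ge_atTop (0:ℝ)] with t htT hgM ht0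
      have hgt : 0 < g t := hgpos t ht0
      have hbound : xhstar t ≤ max M (Real.exp (c * g t)) := by
        rw [hxhstar]
        apply csSup_le
        · exact ⟨xh 0, ⟨0, ⟨le_refl 0, ht0⟩, rfl⟩⟩
        · rintro y ⟨s, hs, rfl⟩
          rcases le_or_gt s T' with hsT | hsT
          · exact le_max_of_le_left (hmem T' hT'0 s ⟨hs.1, hsT⟩)
          · have hsT2 : T ≤ s := le_trans (le_max_left _ _) hsT.le
            have h1 := (hT s hsT2).1
            have hs0 : (0:ℝ) ≤ s := hs.1
            have hgs : 0 < g s := hgpos s hs0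
            have h2 : Real.log (xh s) < c * g s := by
              rwa [div_lt_iff₀ hgs] at h1
            have h3 : c * g s ≤ c * g t :=
              mul_le_mul_of_nonneg_left (hgmono hs0 ht0 hs.2) hcpos.le
            have : xh s ≤ Real.exp (c * g t) := by
              calc xh s = Real.exp (Real.log (xh s)) := (Real.exp_log (hxhpos s hs0)).symm
                _ ≤ Real.exp (c * g t) := Real.exp_le_exp.2 (le_trans h2.le h3)
            exact le_max_of_le_right this
      have hlogb : Real.log (xhstar t) < b * g t := by
        have h1 : Real.log (xhstar t) ≤ max (Real.log M) (c * g t) := by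
          rcases max_cases M (Real.exp (c * g t)) with ⟨heq, _⟩ | ⟨heq, _⟩
          · rw [heq] at hbound
            exact le_max_of_le_left (Real.log_le_log (hSpos t ht0) hbound)
          · rw [heq] at hbound
            have := Real.log_le_log (hSpos t ht0) hbound
            rw [Real.log_exp] at this
            exact le_max_of_le_right this
        refine lt_of_le_of_lt h1 ?_
        apply max_lt
        · calc Real.log M < g t := hgM
            _ = 1 * g t := (one_mul _).symm
            _ < b * g t := by nlinarith
        · nlinarith
      rwa [div_lt_iff₀ hgt]
  -- bounds on log axh
  have hkey : ∀ t ≥ (0:ℝ),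
      Real.log α + (1 - α) * Real.log (xhstar t) ≤ Real.log (axh t) ∧
      Real.log (axh t) ≤ (1 - α) * Real.log (xhstar t) := by
    intro t ht
    have hS := hSpos t ht
    have hSne : xhstar t ≠ 0 := hS.ne'
    have hrw : xhstar t ^ (1 - α) = xhstar t * xhstar t ^ (-α) := by
      rw [show (1:ℝ) - α = 1 + -α by ring, Real.rpow_add hS, Real.rpow_one]
    have hrp : 0 < xhstar t ^ (1 - α) := Real.rpow_pos_of_pos hS _
    have hrn : 0 < xhstar t ^ (-α) := Real.rpow_pos_of_pos hS _
    have hxp := hxhpos t ht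
    have hα1' : 0 < 1 - α := by linarith
    have hupper : axh t ≤ xhstar t ^ (1 - α) := by
      rw [haxh]
      have : xh t * xhstar t ^ (-α) ≤ xhstar t ^ (1 - α) := by
        rw [hrw]
        exact mul_le_mul_of_nonneg_right (hle t ht) hrn.le
      nlinarith
    have hlower : α * xhstar t ^ (1 - α) ≤ axh t := by
      rw [haxh]
      nlinarith [mul_nonneg (mul_nonneg hα1'.le hxp.le) hrn.le]
    have hapos : 0 < axh t := lt_of_lt_of_le (by positivity) hlower
    constructor
    · calc Real.log α + (1 - α) * Real.log (xhstar t)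
          = Real.log (α * xhstar t ^ (1 - α)) := by
            rw [Real.log_mul hα0.ne' hrp.ne', Real.log_rpow hS]
        _ ≤ Real.log (axh t) := Real.log_le_log (by positivity) hlower
    · calc Real.log (axh t) ≤ Real.log (xhstar t ^ (1 - α)) :=
            Real.log_le_log hapos hupper
        _ = (1 - α) * Real.log (xhstar t) := Real.log_rpow hS _
  -- squeeze
  have hlow : Tendsto (fun t => Real.log α / g t + (1 - α) * (Real.log (xhstar t) / g t))
      atTop (nhds (1 - α)) := by
    have h1 : Tendsto (fun t => Real.log α / g t) atTop (nhds 0) :=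
      Tendsto.div_atTop tendsto_const_nhds hginf
    have h2 : Tendsto (fun t => (1 - α) * (Real.log (xhstar t) / g t)) atTop
        (nhds ((1 - α) * 1)) := hstarlim.const_mul _
    have := h1.add h2
    simpa using this
  have hhigh : Tendsto (fun t => (1 - α) * (Real.log (xhstar t) / g t)) atTop
      (nhds (1 - α)) := by
    have := hstarlim.const_mul (1 - α)
    simpa using this
  refine tendsto_of_tendsto_of_tendsto_of_le_of_le' hlow hhigh ?_ ?_
  · filter_upwards [eventually_ge_atTop (0:ℝ)] with t ht
    have := (hkey t ht).1
    have hgt := hgpos t ht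
    rw [← mul_div_assoc, ← add_div]
    exact div_le_div_of_nonneg_right this hgt.le
  · filter_upwards [eventually_ge_atTop (0:ℝ)] with t ht
    have := (hkey t ht).2
    have hgt := hgpos t ht
    rw [← mul_div_assoc]
    exact div_le_div_of_nonneg_right this hgt.le
end

section
/- Let $\alpha \in (0,1)$. Let $z, x : [0,\infty) \to [0,\infty)$ be continuous functions, each satisfying the $\alpha$-drawdown constraint relative to its own running maximum: $z(t) \geq \alpha z^*(t)$ and $x(t) \geq \alpha x^*(t)$ for all $t$, with $x(t) > 0$ for all $t$. Let $\sigma \geq 0$ be a time of maximum of $z$, i.e., $z(\sigma) = z^*(\sigma)$. Define the concatenation $\xi(t) = z(t)$ for $t < \sigma$ and $\xi(t) = \frac{z(\sigma)}{x(\sigma)} x(t)$ for $t \geq \sigma$. Then $\xi$ satisfies the $\alpha$-drawdown constraint: $\xi(t) \geq \alpha \xi^*(t)$ for all $t \geq 0$. -/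
open Real Set

lemma aux_le_sSup (f : ℝ → ℝ) (hf : ContinuousOn f (Set.Ici 0))
    (t s : ℝ) (hs : s ∈ Set.Icc 0 t) : f s ≤ sSup (f '' Set.Icc 0 t) :=
  le_csSup ((isCompact_Icc.image_of_continuousOn
    (hf.mono Set.Icc_subset_Ici_self)).bddAbove) (Set.mem_image_of_mem f hs)

theorem switching_preserves_drawdown
    (α : ℝ) (hα0 : 0 < α) (hα1 : α < 1)
    (z x : ℝ → ℝ)
    (hzc : ContinuousOn z (Set.Ici 0)) (hxc : ContinuousOn x (Set.Ici 0))
    (hznn : ∀ t ≥ (0:ℝ), 0 ≤ z t) (hxpos : ∀ t ≥ (0:ℝ), 0 < x t)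
    (zstar xstar : ℝ → ℝ)
    (hzstar : ∀ t, zstar t = sSup (z '' Set.Icc 0 t))
    (hxstar : ∀ t, xstar t = sSup (x '' Set.Icc 0 t))
    (hzdd : ∀ t ≥ (0:ℝ), α * zstar t ≤ z t)
    (hxdd : ∀ t ≥ (0:ℝ), α * xstar t ≤ x t)
    (σ : ℝ) (hσ : 0 ≤ σ) (hmax : z σ = zstar σ)
    (ξ : ℝ → ℝ)
    (hξ : ∀ t, ξ t = if t < σ then z t else z σ / x σ * x t) :
    ∀ t ≥ (0:ℝ), α * sSup (ξ '' Set.Icc 0 t) ≤ ξ t := by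
  intro t ht
  have hxσ := hxpos σ hσ
  set c : ℝ := z σ / x σ with hc
  have hc0 : 0 ≤ c := div_nonneg (hznn σ hσ) hxσ.le
  have hcxσ : c * x σ = z σ := div_mul_cancel₀ _ hxσ.ne'
  by_cases htσ : t < σ
  · -- before switching: ξ = z on [0,t]
    have himg : ξ '' Set.Icc 0 t = z '' Set.Icc 0 t := by
      apply Set.image_congr
      intro s hs
      rw [hξ s, if_pos (lt_of_le_of_lt hs.2 htσ)]
    rw [himg, hξ t, if_pos htσ, ← hzstar t]
    exact hzdd t ht
  · push_neg at htσ
    rw [hξ t, if_neg (not_lt.mpr htσ)]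
    -- sup of ξ on [0,t] ≤ c * xstar t
    have hub : sSup (ξ '' Set.Icc 0 t) ≤ c * xstar t := by
      apply csSup_le ((Set.nonempty_Icc.mpr ht).image ξ)
      rintro _ ⟨s, hs, rfl⟩
      have hxs_le : ∀ u ∈ Set.Icc (0:ℝ) t, x u ≤ xstar t := by
        intro u hu; rw [hxstar t]; exact aux_le_sSup x hxc t u hu
      rw [hξ s]
      by_cases hsσ : s < σ
      · rw [if_pos hsσ]
        have h1 : z s ≤ zstar σ := by
          rw [hzstar σ]
          exact aux_le_sSup z hzc σ s ⟨hs.1, hsσ.le⟩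
        calc z s ≤ zstar σ := h1
          _ = c * x σ := by rw [hcxσ, hmax]
          _ ≤ c * xstar t := by
              exact mul_le_mul_of_nonneg_left (hxs_le σ ⟨hσ, htσ⟩) hc0
      · rw [if_neg hsσ]
        exact mul_le_mul_of_nonneg_left (hxs_le s hs) hc0
    calc α * sSup (ξ '' Set.Icc 0 t) ≤ α * (c * xstar t) :=
          mul_le_mul_of_nonneg_left hub hα0.le
      _ = c * (α * xstar t) := by ring
      _ ≤ c * x t := mul_le_mul_of_nonneg_left (hxdd t ht) hc0
end
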